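/- Let (A_k)_{k∈ℕ} be matrices in ℝ^{n×n}, (B_k)_{k∈ℕ} and (D_k)_{k∈ℕ} vectors in ℝ^n (viewed as n×1 matrices), (o_k)_{k∈ℕ} vectors in ℝ^n, c ∈ ℝ^n, and let (x_k)_{k∈ℕ} in ℝ^n, (u_k)_{k∈ℕ} and (d_k)_{k∈ℕ} in ℝ satisfy x_{k+1} = A_k x_k + B_k u_k + D_k d_k + o_k and y_k = cᵀ x_k for all k. Fix k ∈ ℕ, δ ≥ 1 and δ_d ≥ 1 with δ_d ≤ δ, and suppose that cᵀ (A_{k+δ−1} ⋯ A_{k+j+1}) B_{k+j} = 0 for every j with 1 ≤ j ≤ δ−1 and cᵀ (A_{k+δ−1} ⋯ A_{k+j+1}) D_{k+j} = 0 for every j with δ−δ_d < j ≤ δ−1 (where the matrix product over an empty index range is the identity). Then y_{k+δ} = cᵀ (A_{k+δ−1} ⋯ A_k) x_k + cᵀ (A_{k+δ−1} ⋯ A_{k+1}) B_k u_k + Σ_{j=0}^{δ−δ_d} cᵀ (A_{k+δ−1} ⋯ A_{k+j+1}) D_{k+j} d_{k+j} + Σ_{j=0}^{δ−1} cᵀ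 (A_{k+δ−1} ⋯ A_{k+j+1}) o_{k+j}. -/
import Mathlib


open Matrix Finset

/-- Ordered product of time-varying matrices: `prodDesc A lo m = A_{lo+m-1} ⋯ A_{lo+1} A_{lo}`,
with the empty product (`m = 0`) equal to the identity. -/
def prodDesc {n : ℕ} (A : ℕ → Matrix (Fin n) (Fin n) ℝ) (lo : ℕ) :
    ℕ → Matrix (Fin n) (Fin n) ℝ
  | 0 => 1
  | m + 1 => A (lo + m) * prodDesc A lo m

lemma mulVec_sum_aux {n : ℕ} (M : Matrix (Fin n) (Fin n) ℝ) (s : Finset ℕ)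
    (f : ℕ → Fin n → ℝ) :
    M.mulVec (∑ i ∈ s, f i) = ∑ i ∈ s, M.mulVec (f i) := by
  simp only [← Matrix.mulVecLin_apply]; exact map_sum M.mulVecLin f s

lemma dotProduct_sum_aux {n : ℕ} (c : Fin n → ℝ) (s : Finset ℕ) (f : ℕ → Fin n → ℝ) :
    c ⬝ᵥ (∑ i ∈ s, f i) = ∑ i ∈ s, c ⬝ᵥ f i := by
  simp only [dotProduct, Finset.mul_sum, Finset.sum_apply]
  rw [Finset.sum_comm]

lemma state_formula {n : ℕ} (A : ℕ → Matrix (Fin n) (Fin n) ℝ) (w : ℕ → Fin n → ℝ)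
    (x : ℕ → Fin n → ℝ) (hx : ∀ j, x (j + 1) = (A j).mulVec (x j) + w j) (k : ℕ) :
    ∀ m, x (k + m) = (prodDesc A k m).mulVec (x k)
      + ∑ j ∈ Finset.range m, (prodDesc A (k + j + 1) (m - 1 - j)).mulVec (w (k + j)) := by
  intro m
  induction m with
  | zero => simp [prodDesc]
  | succ m ih =>
    have : k + (m + 1) = (k + m) + 1 := by omega
    rw [this, hx, ih]
    rw [Finset.sum_range_succ]
    have h0 : (m + 1 - 1 - m) = 0 := by omega
    simp only [h0, prodDesc, Matrix.one_mulVec]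
    rw [Matrix.mulVec_add, Matrix.mulVec_mulVec]
    have hsum : (A (k + m)).mulVec
        (∑ j ∈ Finset.range m, (prodDesc A (k + j + 1) (m - 1 - j)).mulVec (w (k + j)))
        = ∑ j ∈ Finset.range m,
          (prodDesc A (k + j + 1) (m + 1 - 1 - j)).mulVec (w (k + j)) := by
      rw [mulVec_sum_aux]
      apply Finset.sum_congr rfl
      intro j hj
      have hj' : j < m := Finset.mem_range.mp hj
      have h1 : m + 1 - 1 - j = (m - 1 - j) + 1 := by omega
      rw [h1]
      show _ = (prodDesc A (k + j + 1) ((m - 1 - j) + 1)).mulVec (w (k + j))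
      rw [show prodDesc A (k + j + 1) ((m - 1 - j) + 1)
          = A (k + j + 1 + (m - 1 - j)) * prodDesc A (k + j + 1) (m - 1 - j) from rfl]
      have h2 : k + j + 1 + (m - 1 - j) = k + m := by omega
      rw [h2, ← Matrix.mulVec_mulVec]
    rw [hsum]
    abel

/-- Feedback-linearization identity with measured disturbance: for a system with relative
degree `δ` for the input and `δ_d ≤ δ` for the disturbance,
`y_{k+δ} = cᵀ(A_{k+δ−1}⋯A_k)x_k + cᵀ(A_{k+δ−1}⋯A_{k+1})B_k u_k
  + ∑_{j=0}^{δ−δ_d} cᵀ(A_{k+δ−1}⋯A_{k+j+1})D_{k+j} d_{k+j}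
  + ∑_{j=0}^{δ−1} cᵀ(A_{k+δ−1}⋯A_{k+j+1}) o_{k+j}`. -/
theorem feedback_linearization_disturbance_identity (n : ℕ)
    (A : ℕ → Matrix (Fin n) (Fin n) ℝ) (B D : ℕ → Fin n → ℝ) (o : ℕ → Fin n → ℝ)
    (c : Fin n → ℝ) (x : ℕ → Fin n → ℝ) (u d : ℕ → ℝ) (y : ℕ → ℝ)
    (hx : ∀ j, x (j + 1) = (A j).mulVec (x j) + u j • B j + d j • D j + o j)
    (hy : ∀ j, y j = c ⬝ᵥ x j)
    (k δ δd : ℕ) (hδ : 1 ≤ δ) (hδd : 1 ≤ δd) (hδdδ : δd ≤ δ)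
    (hrelB : ∀ j, 1 ≤ j → j ≤ δ - 1 →
      c ⬝ᵥ (prodDesc A (k + j + 1) (δ - 1 - j)).mulVec (B (k + j)) = 0)
    (hrelD : ∀ j, δ - δd < j → j ≤ δ - 1 →
      c ⬝ᵥ (prodDesc A (k + j + 1) (δ - 1 - j)).mulVec (D (k + j)) = 0) :
    y (k + δ) = c ⬝ᵥ (prodDesc A k δ).mulVec (x k)
      + (c ⬝ᵥ (prodDesc A (k + 1) (δ - 1)).mulVec (B k)) * u k
      + ∑ j ∈ Finset.range (δ - δd + 1),
          (c ⬝ᵥ (prodDesc A (k + j + 1) (δ - 1 - j)).mulVec (D (k + j))) * d (k + j)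
      + ∑ j ∈ Finset.range δ,
          c ⬝ᵥ (prodDesc A (k + j + 1) (δ - 1 - j)).mulVec (o (k + j)) := by
  have hx' : ∀ j, x (j + 1) = (A j).mulVec (x j) + (u j • B j + d j • D j + o j) := by
    intro j; rw [hx j]; abel
  have key := state_formula A (fun j => u j • B j + d j • D j + o j) x hx' k δ
  rw [hy, key, dotProduct_add, dotProduct_sum_aux]
  have hterm : ∀ j,
      c ⬝ᵥ (prodDesc A (k + j + 1) (δ - 1 - j)).mulVec
        (u (k + j) • B (k + j) + d (k + j) • D (k + j) + o (k + j))
      = (c ⬝ᵥ (prodDesc A (k + j + 1) (δ - 1 - j)).mulVec (B (k + j))) * u (k + j)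
        + (c ⬝ᵥ (prodDesc A (k + j + 1) (δ - 1 - j)).mulVec (D (k + j))) * d (k + j)
        + c ⬝ᵥ (prodDesc A (k + j + 1) (δ - 1 - j)).mulVec (o (k + j)) := by
    intro j
    rw [Matrix.mulVec_add, Matrix.mulVec_add, Matrix.mulVec_smul, Matrix.mulVec_smul,
      dotProduct_add, dotProduct_add, dotProduct_smul,
      dotProduct_smul]
    simp only [smul_eq_mul]; ring
  simp only [hterm]
  rw [Finset.sum_add_distrib, Finset.sum_add_distrib]
  have hB : ∑ j ∈ Finset.range δ,
      (c ⬝ᵥ (prodDesc A (k + j + 1) (δ - 1 - j)).mulVec (B (k + j))) * u (k + j)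
      = (c ⬝ᵥ (prodDesc A (k + 1) (δ - 1)).mulVec (B k)) * u k := by
    rw [Finset.sum_eq_single 0]
    · simp
    · intro j hj hj0
      have hj' : j < δ := Finset.mem_range.mp hj
      rw [hrelB j (by omega) (by omega), zero_mul]
    · intro h; exact absurd (Finset.mem_range.mpr (by omega)) h
  have hD : ∑ j ∈ Finset.range δ,
      (c ⬝ᵥ (prodDesc A (k + j + 1) (δ - 1 - j)).mulVec (D (k + j))) * d (k + j)
      = ∑ j ∈ Finset.range (δ - δd + 1),
        (c ⬝ᵥ (prodDesc A (k + j + 1) (δ - 1 - j)).mulVec (D (k + j))) * d (k + j) := by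
    symm
    apply Finset.sum_subset (Finset.range_subset_range.mpr (by omega))
    intro j hj hj'
    have h1 : j < δ := Finset.mem_range.mp hj
    have h2 : ¬ j < δ - δd + 1 := fun h => hj' (Finset.mem_range.mpr h)
    rw [hrelD j (by omega) (by omega), zero_mul]
  rw [hB, hD]
  ring
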